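/- Under conditions (C.5), (C.7) and (C.9.ii), ‖L_n − E L_n‖_op = O_p(d/n^{1/2}); in particular, if d = o(n^{1/2}) then ‖L_n − E L_n‖_op → 0 in probability. -/

import Mathlib

/-!
Each entry of `L_n − E L_n` equals `−n⁻¹ ∑ᵢ cᵢ (yᵢ − μᵢ)` with independent centred summands and
coefficients `cᵢ = x_{ij} x_{ik} h''(xᵢᵀβ)` bounded by (C.5) and (C.9.ii); since
`Var yᵢ ≤ 1 + E|yᵢ|⁶`, (C.7) makes its second moment `O(1/n)`. Summing over the `d²` entries gives
`E ‖L_n − E L_n‖²_HS = O(d²/n)`, and as the operator norm is dominated by the Hilbert–Schmidt norm,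
Chebyshev's inequality yields the rate `O_p(d/√n)`, which tends to `0` when `d = o(√n)`.
-/

open MeasureTheory ProbabilityTheory Filter Matrix Topology Asymptotics
open scoped BigOperators ENNReal NNReal

noncomputable section

/-- Euclidean norm on `Fin d → ℝ`. -/
def euclNorm {d : ℕ} (v : Fin d → ℝ) : ℝ := Real.sqrt (∑ j, (v j) ^ 2)

/-- `μ` is the centered Gaussian measure on `ℝ^d` with covariance matrix `S`,
characterized through its one–dimensional marginals. -/
def IsCenteredGaussian {d : ℕ} (μ : Measure (Fin d → ℝ))
    (S : Matrix (Fin d) (Fin d) ℝ) : Prop :=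
  ∀ t : Fin d → ℝ,
    μ.map (fun v => t ⬝ᵥ v) = gaussianReal 0 (t ⬝ᵥ S.mulVec t).toNNReal

/-- Supremum of a set-function over the class of measurable convex subsets of `ℝ^d`. -/
def convexSup {d : ℕ} (f : Set (Fin d → ℝ) → ℝ) : ℝ :=
  ⨆ A : {A : Set (Fin d → ℝ) // MeasurableSet A ∧ Convex ℝ A}, f A.1

/-- Supremum of a set-function over the class of Euclidean balls of `ℝ^d`. -/
def ballSup {d : ℕ} (f : Set (Fin d → ℝ) → ℝ) : ℝ :=
  ⨆ c : Fin d → ℝ, ⨆ r : ℝ, f {v | euclNorm (v - c) < r}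

/-- `ε ` - neighbourhood of a set (with respect to the Euclidean distance). -/
def nbhd {d : ℕ} (s : Set (Fin d → ℝ)) (ε : ℝ) : Set (Fin d → ℝ) :=
  {v | ∃ a ∈ s, euclNorm (v - a) < ε}

/-- Hilbert–Schmidt (Frobenius) norm of a matrix. -/
def hsNorm {d : ℕ} (A : Matrix (Fin d) (Fin d) ℝ) : ℝ :=
  Real.sqrt (∑ j, ∑ k, (A j k) ^ 2)

/-- Operator norm of a matrix, acting on Euclidean space. -/
def matOpNorm {d : ℕ} (A : Matrix (Fin d) (Fin d) ℝ) : ℝ :=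
  ⨆ v : {v : Fin d → ℝ // euclNorm v ≤ 1}, euclNorm (A.mulVec v.1)

/-- Conditional covariance matrix of a random vector `Z` under the measure `P'`. -/
def condVarMat {Ω' : Type*} [MeasurableSpace Ω'] {d : ℕ} (P' : Measure Ω')
    (Z : Ω' → Fin d → ℝ) : Matrix (Fin d) (Fin d) ℝ :=
  Matrix.of fun j k =>
    ∫ ω', (Z ω' j - ∫ ω'', Z ω'' j ∂P') * (Z ω' k - ∫ ω'', Z ω'' k ∂P') ∂P'

/-- The triangular-array data of a generalized linear model:  independent responses
`y n i` with nonrandom covariates `x n i ∈ ℝ^(d n)`, true parameter `β n`,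
link components `b`, `h = (g ∘ b')⁻¹` and `ginv = g⁻¹`, such that
`E[y n i] = g⁻¹(xᵢᵀβ)`. -/
structure GLM (Ω : Type*) [MeasurableSpace Ω] where
  P : Measure Ω
  prob : IsProbabilityMeasure P
  d : ℕ → ℕ
  y : (n : ℕ) → Fin n → Ω → ℝ
  x : (n : ℕ) → Fin n → Fin (d n) → ℝ
  β : (n : ℕ) → Fin (d n) → ℝ
  b : ℝ → ℝ
  h : ℝ → ℝ
  ginv : ℝ → ℝ
  meas_y : ∀ n i, Measurable (y n i)
  indep_y : ∀ n, iIndepFun (y n) P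
  int_y : ∀ n i, Integrable (y n i) P
  mean_y : ∀ n i, ∫ ω, y n i ω ∂P = ginv (x n i ⬝ᵥ β n)

namespace GLM

variable {Ω : Type*} [MeasurableSpace Ω] (M : GLM Ω)

/-- The linear predictor `xᵢᵀβ`. -/
def lin (n : ℕ) (i : Fin n) : ℝ := M.x n i ⬝ᵥ M.β n

/-- `μᵢ = E[yᵢ] = g⁻¹(xᵢᵀβ)`. -/
def meanY (n : ℕ) (i : Fin n) : ℝ := M.ginv (M.lin n i)

/-- `h₁ = b ∘ h`. -/
def h1 : ℝ → ℝ := fun u => M.b (M.h u)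

/-- The negative log-likelihood `∑ᵢ (−yᵢ h(xᵢᵀv) + h₁(xᵢᵀv))`. -/
def nll (n : ℕ) (ω : Ω) (v : Fin (M.d n) → ℝ) : ℝ :=
  ∑ i : Fin n, (-(M.y n i ω) * M.h (M.x n i ⬝ᵥ v) + M.h1 (M.x n i ⬝ᵥ v))

/-- `W_n = n^{-1/2} ∑ᵢ (yᵢ − μᵢ) h'(xᵢᵀβ) xᵢ`. -/
def W (n : ℕ) (ω : Ω) : Fin (M.d n) → ℝ := fun j =>
  (Real.sqrt n)⁻¹ * ∑ i : Fin n,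
    (M.y n i ω - M.meanY n i) * deriv M.h (M.lin n i) * M.x n i j

/-- `S_n = Var(W_n)`. -/
def S (n : ℕ) : Matrix (Fin (M.d n)) (Fin (M.d n)) ℝ :=
  Matrix.of fun j k => (n : ℝ)⁻¹ * ∑ i : Fin n,
    M.x n i j * M.x n i k * (deriv M.h (M.lin n i)) ^ 2 *
      ∫ ω, (M.y n i ω - M.meanY n i) ^ 2 ∂M.P

/-- The random matrix `L_n`. -/
def L (n : ℕ) (ω : Ω) : Matrix (Fin (M.d n)) (Fin (M.d n)) ℝ :=
  Matrix.of fun j k => (n : ℝ)⁻¹ * ∑ i : Fin n,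
    M.x n i j * M.x n i k *
      (deriv M.ginv (M.lin n i) * deriv M.h (M.lin n i) -
        (M.y n i ω - M.meanY n i) * deriv (deriv M.h) (M.lin n i))

/-- `E L_n`. -/
def EL (n : ℕ) : Matrix (Fin (M.d n)) (Fin (M.d n)) ℝ :=
  Matrix.of fun j k => (n : ℝ)⁻¹ * ∑ i : Fin n,
    M.x n i j * M.x n i k * (deriv M.ginv (M.lin n i) * deriv M.h (M.lin n i))

/-- The leading (Bahadur) term `T_n = (E L_n)⁻¹ W_n`. -/
def T (n : ℕ) (ω : Ω) : Fin (M.d n) → ℝ := (M.EL n)⁻¹.mulVec (M.W n ω)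

/-- `S̃_n = (E L_n)⁻¹ S_n (E L_n)⁻¹`. -/
def Stilde (n : ℕ) : Matrix (Fin (M.d n)) (Fin (M.d n)) ℝ :=
  (M.EL n)⁻¹ * M.S n * (M.EL n)⁻¹

/-- Condition (C.1). -/
def C1 : Prop :=
  (M.h = id ∧ M.b = fun u => u ^ 2 / 2) ∨
    ((∀ n i ω, 0 ≤ M.y n i ω) ∧ StrictConvexOn ℝ Set.univ (fun u => -(M.h u)) ∧
      StrictConvexOn ℝ Set.univ M.h1)

/-- Condition (C.2). -/
def C2 : Prop := ContDiff ℝ 3 M.h ∧ ContDiff ℝ 2 M.ginv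

/-- Condition (C.3). -/
def C3 : Prop := ∀ n : ℕ, 0 < n → (M.S n).PosDef ∧ ∀ ω, (M.L n ω).PosDef

/-- Condition (C.4), expressed through the quadratic forms of `S_n` and `E L_n`. -/
def C4 (α1 α2 α3 c1 c2 c3 : ℝ) : Prop :=
  0 < α1 ∧ 0 < α2 ∧ 0 < α3 ∧ α1 + 2 * α2 + 2 * α3 < 1 / 2 ∧ α2 < 1 / 14 ∧
    0 < c1 ∧ 0 < c2 ∧ c2 < c3 ∧
    ∀ n : ℕ, 0 < n →
      (∀ v : Fin (M.d n) → ℝ,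
        c1 * (n : ℝ) ^ (-α1) * euclNorm v ^ 2 ≤ v ⬝ᵥ (M.S n).mulVec v) ∧
      (∀ v : Fin (M.d n) → ℝ,
        c2 * (n : ℝ) ^ (-α2) * euclNorm v ^ 2 ≤ v ⬝ᵥ (M.EL n).mulVec v ∧
          v ⬝ᵥ (M.EL n).mulVec v ≤ c3 * (n : ℝ) ^ α3 * euclNorm v ^ 2)

/-- Condition (C.5). -/
def C5 : Prop := ∃ K : ℝ, ∀ n (i : Fin n) j, |M.x n i j| ≤ K

/-- Condition (C.6). -/
def C6 : Prop := ∃ K : ℝ, ∀ n j, |M.β n j| ≤ K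

/-- Condition (C.7). -/
def C7 : Prop :=
  (∀ n i, Integrable (fun ω => |M.y n i ω| ^ 6) M.P) ∧
    ∃ K : ℝ, ∀ n : ℕ, 0 < n →
      (n : ℝ)⁻¹ * ∑ i : Fin n, ∫ ω, |M.y n i ω| ^ 6 ∂M.P ≤ K

/-- Condition (C.8). -/
def C8 : Prop :=
  ∃ K : ℝ, ∀ n : ℕ, 0 < n → ∀ a k : Fin (M.d n) → ℝ, euclNorm a = 1 → euclNorm k = 1 →
    (n : ℝ)⁻¹ * ∑ i : Fin n, |a ⬝ᵥ M.x n i| ^ 8 * |k ⬝ᵥ M.x n i| ^ 8 ≤ K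

/-- Condition (C.9.i). -/
def C9i : Prop := ∃ K : ℝ, ∀ n (i : Fin n), |deriv M.h (M.lin n i)| ≤ K

/-- Condition (C.9.ii). -/
def C9ii : Prop := ∃ K : ℝ, ∀ n (i : Fin n), |deriv (deriv M.h) (M.lin n i)| ≤ K

/-- Condition (C.9.iii). -/
def C9iii : Prop := ∃ K : ℝ, ∀ n (i : Fin n), |deriv M.ginv (M.lin n i)| ≤ K

/-- Condition (C.9.iv). -/
def C9iv : Prop :=
  ∃ δ : ℝ, 0 < δ ∧ ∃ K : ℝ, ∀ n : ℕ, 0 < n → ∃ Bnd : Fin n → ℝ,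
    (∀ i z, |z - M.lin n i| < δ → |deriv (deriv M.ginv) z| ^ 8 ≤ Bnd i) ∧
    (n : ℝ)⁻¹ * ∑ i, Bnd i ≤ K

/-- Condition (C.9.v). -/
def C9v : Prop :=
  ∃ δ : ℝ, 0 < δ ∧ ∃ K : ℝ, ∀ n : ℕ, 0 < n → ∃ Bnd : Fin n → ℝ,
    (∀ i z, |z - M.lin n i| < δ → |deriv (deriv (deriv M.h)) z| ^ 12 ≤ Bnd i) ∧
    (n : ℝ)⁻¹ * ∑ i, Bnd i ≤ K

/-- Condition (C.9). -/
def C9 : Prop := M.C9i ∧ M.C9ii ∧ M.C9iii ∧ M.C9iv ∧ M.C9v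

/-- The plug-in matrix `L̂_n`, computed at an estimator `βhat`. -/
def Lhat (βhat : (n : ℕ) → Ω → Fin (M.d n) → ℝ) (n : ℕ) (ω : Ω) :
    Matrix (Fin (M.d n)) (Fin (M.d n)) ℝ :=
  Matrix.of fun j k => (n : ℝ)⁻¹ * ∑ i : Fin n,
    M.x n i j * M.x n i k *
      (deriv M.ginv (M.x n i ⬝ᵥ βhat n ω) * deriv M.h (M.x n i ⬝ᵥ βhat n ω) -
        (M.y n i ω - M.ginv (M.x n i ⬝ᵥ βhat n ω)) * deriv (deriv M.h) (M.x n i ⬝ᵥ βhat n ω))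

/-- The perturbation-bootstrap objective function for the GLM estimator. -/
def bootObj {Ω' : Type*} (βhat : (n : ℕ) → Ω → Fin (M.d n) → ℝ) (Gs : ℕ → Ω' → ℝ)
    (μG : ℝ) (n : ℕ) (ω : Ω) (ω' : Ω') (v : Fin (M.d n) → ℝ) : ℝ :=
  M.nll n ω v + ∑ i : Fin n,
    (M.y n i ω - M.ginv (M.x n i ⬝ᵥ βhat n ω)) * deriv M.h (M.x n i ⬝ᵥ βhat n ω) *
      (2 - Gs i.1 ω' / μG) * (M.x n i ⬝ᵥ v)

/-- The bootstrap score vector `Ŵ_n^*`. -/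
def What {Ω' : Type*} (βhat : (n : ℕ) → Ω → Fin (M.d n) → ℝ) (Gs : ℕ → Ω' → ℝ)
    (μG : ℝ) (n : ℕ) (ω : Ω) (ω' : Ω') : Fin (M.d n) → ℝ := fun j =>
  (Real.sqrt n)⁻¹ * ∑ i : Fin n,
    (M.y n i ω - M.ginv (M.x n i ⬝ᵥ βhat n ω)) * deriv M.h (M.x n i ⬝ᵥ βhat n ω) *
      (Gs i.1 ω' / μG - 1) * M.x n i j

/-- The bootstrap leading term `T̂_n^* = L̂_n⁻¹ Ŵ_n^*`. -/
def That {Ω' : Type*} (βhat : (n : ℕ) → Ω → Fin (M.d n) → ℝ) (Gs : ℕ → Ω' → ℝ)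
    (μG : ℝ) (n : ℕ) (ω : Ω) (ω' : Ω') : Fin (M.d n) → ℝ :=
  (M.Lhat βhat n ω)⁻¹.mulVec (M.What βhat Gs μG n ω ω')

/-- The ℓ¹-penalized negative log-likelihood (Lasso objective). -/
def lassoObj (lam : ℕ → ℝ) (n : ℕ) (ω : Ω) (v : Fin (M.d n) → ℝ) : ℝ :=
  M.nll n ω v + lam n * ∑ j, |v j|

/-- The perturbation-bootstrap Lasso objective function. -/
def bootLassoObj {Ω' : Type*} (βbar : (n : ℕ) → Ω → Fin (M.d n) → ℝ) (Gs : ℕ → Ω' → ℝ)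
    (μG : ℝ) (lam : ℕ → ℝ) (n : ℕ) (ω : Ω) (ω' : Ω') (v : Fin (M.d n) → ℝ) : ℝ :=
  M.nll n ω v + ∑ i : Fin n,
    (M.y n i ω - M.ginv (M.x n i ⬝ᵥ βbar n ω)) * deriv M.h (M.x n i ⬝ᵥ βbar n ω) *
      (2 - Gs i.1 ω' / μG) * (M.x n i ⬝ᵥ v) + lam n * ∑ j, |v j|

/-- The `(1,1)` block (active coordinates) of `E L_n`. -/
def EL11 (d0 : ℕ → ℕ) (hd0 : ∀ n, d0 n ≤ M.d n) (n : ℕ) :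
    Matrix (Fin (d0 n)) (Fin (d0 n)) ℝ :=
  (M.EL n).submatrix (Fin.castLE (hd0 n)) (Fin.castLE (hd0 n))

/-- The `(1,1)` block of `S_n`. -/
def S11 (d0 : ℕ → ℕ) (hd0 : ∀ n, d0 n ≤ M.d n) (n : ℕ) :
    Matrix (Fin (d0 n)) (Fin (d0 n)) ℝ :=
  (M.S n).submatrix (Fin.castLE (hd0 n)) (Fin.castLE (hd0 n))

/-- `S̃_{n,11} = (E L_{n,11})⁻¹ S_{n,11} (E L_{n,11})⁻¹`. -/
def Stilde11 (d0 : ℕ → ℕ) (hd0 : ∀ n, d0 n ≤ M.d n) (n : ℕ) :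
    Matrix (Fin (d0 n)) (Fin (d0 n)) ℝ :=
  (M.EL11 d0 hd0 n)⁻¹ * M.S11 d0 hd0 n * (M.EL11 d0 hd0 n)⁻¹

/-- The sign vector of the active block `sgn(β^{(1)})`. -/
def sgn1 (d0 : ℕ → ℕ) (hd0 : ∀ n, d0 n ≤ M.d n) (n : ℕ) (k : Fin (d0 n)) : ℝ :=
  Real.sign (M.β n (Fin.castLE (hd0 n) k))

/-- The `j`-th row of `E L_{n,21}` (columns restricted to the active block). -/
def row21 (d0 : ℕ → ℕ) (hd0 : ∀ n, d0 n ≤ M.d n) (n : ℕ) (j : Fin (M.d n)) :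
    Fin (d0 n) → ℝ := fun k => M.EL n j (Fin.castLE (hd0 n) k)

/-- The active part `x_i^{(1)}` of the `i`-th covariate. -/
def x1 (d0 : ℕ → ℕ) (hd0 : ∀ n, d0 n ≤ M.d n) (n : ℕ) (i : Fin n) :
    Fin (d0 n) → ℝ := fun k => M.x n i (Fin.castLE (hd0 n) k)

/-- The active set is `{1, …, d₀}`:  `β_j ≠ 0` exactly for the first `d₀` coordinates. -/
def ActiveFirst (d0 : ℕ → ℕ) : Prop :=
  ∀ n (j : Fin (M.d n)), M.β n j ≠ 0 ↔ (j : ℕ) < d0 n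

/-- Condition (D.1). -/
def D1 (d0 : ℕ → ℕ) (hd0 : ∀ n, d0 n ≤ M.d n) (γ1 γ2 γ3 k1 k2 k3 : ℝ) : Prop :=
  0 < γ1 ∧ 0 < γ2 ∧ 0 < γ3 ∧ γ1 + 2 * γ2 + 2 * γ3 < 1 / 2 ∧ γ2 < 1 / 24 ∧
    0 < k1 ∧ 0 < k2 ∧ k2 < k3 ∧
    ∀ n : ℕ, 0 < n →
      (∀ v : Fin (d0 n) → ℝ,
        k1 * (n : ℝ) ^ (-γ1) * euclNorm v ^ 2 ≤ v ⬝ᵥ (M.S11 d0 hd0 n).mulVec v) ∧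
      (∀ v : Fin (d0 n) → ℝ,
        k2 * (n : ℝ) ^ (-γ2) * euclNorm v ^ 2 ≤ v ⬝ᵥ (M.EL11 d0 hd0 n).mulVec v ∧
          v ⬝ᵥ (M.EL11 d0 hd0 n).mulVec v ≤ k3 * (n : ℝ) ^ γ3 * euclNorm v ^ 2)

/-- Condition (D.2). -/
def D2 (d0 : ℕ → ℕ) (hd0 : ∀ n, d0 n ≤ M.d n) : Prop :=
  ∃ K : ℝ, ∀ n : ℕ, 0 < n → ∀ j : Fin (M.d n), d0 n ≤ (j : ℕ) → ∀ i : Fin n,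
    |M.row21 d0 hd0 n j ⬝ᵥ (M.EL11 d0 hd0 n)⁻¹.mulVec (M.x1 d0 hd0 n i)| ≤ K

/-- Condition (D.3.i). -/
def D3i (d0 : ℕ → ℕ) (γ2 τ : ℝ) : Prop :=
  (fun n => (d0 n : ℝ)) =o[atTop] fun n => (n : ℝ) ^ (1 / 3 - 2 * γ2 - 8 * τ / 9)

/-- Condition (D.3.ii). -/
def D3ii (lam : ℕ → ℝ) (τ B1 : ℝ) : Prop :=
  ∀ n : ℕ, 0 < n → B1 * (n : ℝ) ^ τ ≤ lam n / Real.sqrt n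

/-- Condition (D.3.iii). -/
def D3iii (d0 : ℕ → ℕ) (lam : ℕ → ℝ) (γ2 τ : ℝ) : Prop :=
  ∃ K : ℝ, ∀ n : ℕ, 0 < n →
    lam n / Real.sqrt n ≤ K * (n : ℝ) ^ (1 / 4 - 3 * γ2 / 2 - τ / 3) / (d0 n : ℝ) ^ ((3 : ℝ) / 4)

/-- Condition (D.3.iv), the "beta-min" condition. -/
def D3iv (d0 : ℕ → ℕ) (lam : ℕ → ℝ) (γ2 B2 : ℝ) : Prop :=
  ∀ n : ℕ, 0 < n → ∀ j : Fin (M.d n), (j : ℕ) < d0 n →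
    B2 * (n : ℝ) ^ (-(1 - γ2)) * lam n * Real.sqrt (d0 n) ≤ |M.β n j|

/-- Condition (D.4), the weak irrepresentable condition. -/
def D4 (d0 : ℕ → ℕ) (hd0 : ∀ n, d0 n ≤ M.d n) : Prop :=
  ∃ η : ℝ, 0 < η ∧ ∀ n : ℕ, 0 < n → ∀ j : Fin (M.d n), d0 n ≤ (j : ℕ) →
    |M.row21 d0 hd0 n j ⬝ᵥ (M.EL11 d0 hd0 n)⁻¹.mulVec (M.sgn1 d0 hd0 n)| < 1 - η

end GLM

/-- The perturbation-bootstrap weights `G_1^*, G_2^*, …` : i.i.d. copies of a nonnegative,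
non-degenerate random variable `G^*`, independent of the data, with mean `μG`,
variance `μG ^ 2` and a finite fourth moment. -/
def BootWeights {Ω' : Type*} [MeasurableSpace Ω'] (P' : Measure Ω') (Gs : ℕ → Ω' → ℝ)
    (μG : ℝ) : Prop :=
  (∀ i, Measurable (Gs i)) ∧ (∀ i ω', 0 ≤ Gs i ω') ∧
    iIndepFun Gs P' ∧
    (∀ i, P'.map (Gs i) = P'.map (Gs 0)) ∧
    Integrable (Gs 0) P' ∧ μG = (∫ ω', Gs 0 ω' ∂P') ∧ 0 < μG ∧
    Integrable (fun ω' => (Gs 0 ω') ^ 2) P' ∧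
    (∫ ω', (Gs 0 ω' - μG) ^ 2 ∂P') = μG ^ 2 ∧
    Integrable (fun ω' => (Gs 0 ω') ^ 4) P'

section Moments

variable {Ω : Type*} [MeasurableSpace Ω] {P : Measure Ω}

lemma sq_le_one_add_abs_pow_six (t : ℝ) : t ^ 2 ≤ 1 + |t| ^ 6 := by
  rcases le_or_gt |t| 1 with h | h
  · nlinarith [sq_abs t, abs_nonneg t, pow_nonneg (abs_nonneg t) 6]
  · nlinarith [sq_abs t, pow_le_pow_right₀ h.le (show 2 ≤ 6 by norm_num)]

lemma integrable_sq_of_integrable_abs_pow_six [IsFiniteMeasure P] {X : Ω → ℝ}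
    (hX : AEStronglyMeasurable X P) (h6 : Integrable (fun ω => |X ω| ^ 6) P) :
    Integrable (fun ω => X ω ^ 2) P :=
  ((integrable_const 1).add h6).mono (hX.pow 2) <| ae_of_all _ fun ω => by
    simpa [abs_of_nonneg (sq_nonneg (X ω)), abs_of_nonneg (by positivity : 0 ≤ 1 + |X ω| ^ 6)]
      using sq_le_one_add_abs_pow_six (X ω)

lemma variance_le_one_add_integral_abs_pow_six [IsProbabilityMeasure P] {X : Ω → ℝ}
    (hX : AEStronglyMeasurable X P) (h6 : Integrable (fun ω => |X ω| ^ 6) P) :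
    variance X P ≤ 1 + ∫ ω, |X ω| ^ 6 ∂P :=
  calc variance X P ≤ ∫ ω, X ω ^ 2 ∂P := variance_le_expectation_sq hX
    _ ≤ ∫ ω, (1 + |X ω| ^ 6) ∂P :=
      integral_mono (integrable_sq_of_integrable_abs_pow_six hX h6)
        ((integrable_const 1).add h6) fun ω => sq_le_one_add_abs_pow_six (X ω)
    _ = 1 + ∫ ω, |X ω| ^ 6 ∂P := by simp [integral_add (integrable_const _) h6]

lemma integral_sq_sum_mul_sub_integral [IsFiniteMeasure P] {ι : Type*} [Fintype ι]
    {Y : ι → Ω → ℝ} (hY : iIndepFun Y P) (hY2 : ∀ i, MemLp (Y i) 2 P) (c : ι → ℝ) :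
    ∫ ω, (∑ i, c i * (Y i ω - ∫ ω', Y i ω' ∂P)) ^ 2 ∂P = ∑ i, c i ^ 2 * variance (Y i) P := by
  have hcY : ∀ i, MemLp (fun ω => c i * Y i ω) 2 P := fun i => (hY2 i).const_mul (c i)
  have hsum : MemLp (∑ i, fun ω => c i * Y i ω) 2 P := memLp_finsetSum' _ fun i _ => hcY i
  have hmean : ∫ ω, (∑ i, fun ω => c i * Y i ω) ω ∂P = ∑ i, c i * ∫ ω, Y i ω ∂P := by
    simp only [Finset.sum_apply]
    rw [integral_finsetSum _ fun i _ => (hcY i).integrable one_le_two]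
    simp only [integral_const_mul]
  calc ∫ ω, (∑ i, c i * (Y i ω - ∫ ω', Y i ω' ∂P)) ^ 2 ∂P
      = variance (∑ i, fun ω => c i * Y i ω) P := by
        rw [variance_eq_integral hsum.aemeasurable, hmean]
        simp only [Finset.sum_apply, mul_sub, Finset.sum_sub_distrib]
    _ = ∑ i, variance (fun ω => c i * Y i ω) P :=
        IndepFun.variance_sum (fun i _ => hcY i) fun i _ j _ hij =>
          (hY.indepFun hij).comp (measurable_const_mul (c i)) (measurable_const_mul (c j))
    _ = ∑ i, c i ^ 2 * variance (Y i) P := by simp only [variance_const_mul]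

end Moments

section OperatorNorm

lemma matOpNorm_le_hsNorm {d : ℕ} (A : Matrix (Fin d) (Fin d) ℝ) :
    matOpNorm A ≤ hsNorm A := by
  have : Nonempty {v : Fin d → ℝ // euclNorm v ≤ 1} := ⟨⟨0, by simp [euclNorm]⟩⟩
  refine ciSup_le fun ⟨v, hv⟩ => Real.sqrt_le_sqrt ?_
  have hv2 : ∑ k, v k ^ 2 ≤ 1 := by
    simpa [euclNorm] using (Real.sqrt_le_one (x := ∑ k, v k ^ 2)).mp hv
  calc ∑ j, (A *ᵥ v) j ^ 2 ≤ ∑ j, (∑ k, A j k ^ 2) * ∑ k, v k ^ 2 :=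
        Finset.sum_le_sum fun j _ => by
          simpa [Matrix.mulVec, dotProduct] using Finset.sum_mul_sq_le_sq_mul_sq _ (A j) v
    _ ≤ ∑ j, ∑ k, A j k ^ 2 := Finset.sum_le_sum fun j _ =>
        mul_le_of_le_one_right (Finset.sum_nonneg fun _ _ => sq_nonneg _) hv2

lemma matOpNorm_eq_zero_of_isEmpty {d : ℕ} [IsEmpty (Fin d)] (A : Matrix (Fin d) (Fin d) ℝ) :
    matOpNorm A = 0 := by
  simp [matOpNorm, euclNorm]

end OperatorNorm

section Probability

variable {Ω : Type*} [MeasurableSpace Ω] {P : Measure Ω}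

lemma measureReal_lt_matOpNorm_mul_sq_le [IsFiniteMeasure P] {d : ℕ}
    {A : Ω → Matrix (Fin d) (Fin d) ℝ} (hA : ∀ j k, Integrable (fun ω => A ω j k ^ 2) P)
    {t : ℝ} (ht : 0 ≤ t) :
    P.real {ω | t < matOpNorm (A ω)} * t ^ 2 ≤ ∑ j, ∑ k, ∫ ω, A ω j k ^ 2 ∂P := by
  set F : Ω → ℝ := fun ω => ∑ j, ∑ k, A ω j k ^ 2
  have hF : Integrable F P :=
    integrable_finsetSum _ fun j _ => integrable_finsetSum _ fun k _ => hA j k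
  have hsub : {ω | t < matOpNorm (A ω)} ⊆ {ω | t ^ 2 ≤ F ω} := fun ω hω =>
    (Real.lt_sqrt ht).mp (hω.trans_le (matOpNorm_le_hsNorm (A ω))) |>.le
  calc P.real {ω | t < matOpNorm (A ω)} * t ^ 2 ≤ t ^ 2 * P.real {ω | t ^ 2 ≤ F ω} := by
        rw [mul_comm]; exact mul_le_mul_of_nonneg_left (measureReal_mono hsub) (sq_nonneg t)
    _ ≤ ∫ ω, F ω ∂P :=
        mul_meas_ge_le_integral_of_nonneg (ae_of_all _ fun ω => by positivity) hF _
    _ = ∑ j, ∑ k, ∫ ω, A ω j k ^ 2 ∂P := by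
        rw [integral_finsetSum _ fun j _ => integrable_finsetSum _ fun k _ => hA j k]
        exact Finset.sum_congr rfl fun j _ => integral_finsetSum _ fun k _ => hA j k

lemma tendsto_measureReal_lt_of_isBigOp [IsFiniteMeasure P] {X : ℕ → Ω → ℝ} {r : ℕ → ℝ}
    (hr : Tendsto r atTop (𝓝 0))
    (hX : ∀ ε : ℝ, 0 < ε → ∃ C : ℝ, 0 < C ∧ ∃ N : ℕ, ∀ n ≥ N,
      P.real {ω | C * r n < X n ω} < ε)
    {ε : ℝ} (hε : 0 < ε) :
    Tendsto (fun n => P.real {ω | ε < X n ω}) atTop (𝓝 0) := by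
  refine tendsto_order.2 ⟨fun a ha => Eventually.of_forall fun n => ha.trans_le measureReal_nonneg,
    fun η hη => ?_⟩
  obtain ⟨C, hC, N, hN⟩ := hX η hη
  have hr_small : ∀ᶠ n in atTop, C * r n < ε := by
    simpa using (hr.const_mul C).eventually (gt_mem_nhds (by simpa using hε))
  filter_upwards [hr_small, eventually_ge_atTop N] with n hn hnN
  exact (measureReal_mono fun ω hω => hn.trans hω).trans_lt (hN n hnN)

end Probability

namespace GLM

variable {Ω : Type*} [MeasurableSpace Ω] (M : GLM Ω)

lemma memLp_y_two_of_C7 (hC7 : M.C7) (n : ℕ) (i : Fin n) : MemLp (M.y n i) 2 M.P :=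
  have := M.prob
  (memLp_two_iff_integrable_sq (M.meas_y n i).aestronglyMeasurable).2 <|
    integrable_sq_of_integrable_abs_pow_six (M.meas_y n i).aestronglyMeasurable (hC7.1 n i)

lemma L_sub_EL_apply (n : ℕ) (ω : Ω) (j k : Fin (M.d n)) :
    (M.L n ω - M.EL n) j k = -((n : ℝ)⁻¹ * ∑ i, M.x n i j * M.x n i k *
      deriv (deriv M.h) (M.lin n i) * (M.y n i ω - ∫ ω', M.y n i ω' ∂M.P)) := by
  simp only [Matrix.sub_apply, L, EL, Matrix.of_apply, M.mean_y, meanY, lin]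
  rw [← mul_sub, ← Finset.sum_sub_distrib, ← mul_neg, ← Finset.sum_neg_distrib]
  congr 1
  exact Finset.sum_congr rfl fun i _ => by ring

lemma integral_sq_L_sub_EL_apply (hC7 : M.C7) (n : ℕ) (j k : Fin (M.d n)) :
    ∫ ω, ((M.L n ω - M.EL n) j k) ^ 2 ∂M.P = (n : ℝ)⁻¹ ^ 2 *
      ∑ i, (M.x n i j * M.x n i k * deriv (deriv M.h) (M.lin n i)) ^ 2 *
        variance (M.y n i) M.P := by
  have := M.prob
  simp_rw [L_sub_EL_apply, neg_sq, mul_pow (n : ℝ)⁻¹]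
  rw [integral_const_mul,
    integral_sq_sum_mul_sub_integral (M.indep_y n) (M.memLp_y_two_of_C7 hC7 n)]

lemma integrable_sq_L_sub_EL_apply (hC7 : M.C7) (n : ℕ) (j k : Fin (M.d n)) :
    Integrable (fun ω => ((M.L n ω - M.EL n) j k) ^ 2) M.P := by
  have := M.prob
  have hsum : MemLp (fun ω => ∑ i, M.x n i j * M.x n i k * deriv (deriv M.h) (M.lin n i) *
      (M.y n i ω - ∫ ω', M.y n i ω' ∂M.P)) 2 M.P :=
    memLp_finsetSum _ fun i _ => ((M.memLp_y_two_of_C7 hC7 n i).sub (memLp_const _)).const_mul _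
  simp_rw [L_sub_EL_apply, neg_sq]
  exact (hsum.const_mul _).integrable_sq

lemma exists_integral_sq_L_sub_EL_apply_le (hC5 : M.C5) (hC7 : M.C7) (hC9ii : M.C9ii) :
    ∃ σ2 : ℝ, 0 ≤ σ2 ∧ ∀ n : ℕ, 0 < n → ∀ j k : Fin (M.d n),
      ∫ ω, ((M.L n ω - M.EL n) j k) ^ 2 ∂M.P ≤ σ2 / n := by
  have := M.prob
  obtain ⟨Kx, hKx⟩ := hC5
  obtain ⟨Kh, hKh⟩ := hC9ii
  obtain ⟨Ky, hKy⟩ := hC7.2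
  refine ⟨(Kx * Kx * Kh) ^ 2 * (1 + |Ky|), by positivity, fun n hn j k => ?_⟩
  have hcoef : ∀ i, (M.x n i j * M.x n i k * deriv (deriv M.h) (M.lin n i)) ^ 2 ≤
      (Kx * Kx * Kh) ^ 2 := fun i => by
    rw [← sq_abs, abs_mul, abs_mul]
    have hKx0 : 0 ≤ Kx := (abs_nonneg _).trans (hKx n i j)
    exact pow_le_pow_left₀ (by positivity) (mul_le_mul (mul_le_mul (hKx n i j) (hKx n i k)
      (abs_nonneg _) hKx0) (hKh n i) (abs_nonneg _) (by positivity)) 2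
  have hvar : ∀ i, variance (M.y n i) M.P ≤ 1 + ∫ ω, |M.y n i ω| ^ 6 ∂M.P := fun i =>
    variance_le_one_add_integral_abs_pow_six (M.meas_y n i).aestronglyMeasurable (hC7.1 n i)
  have hmoment : (n : ℝ)⁻¹ * ∑ i, ∫ ω, |M.y n i ω| ^ 6 ∂M.P ≤ |Ky| :=
    (hKy n hn).trans (le_abs_self Ky)
  calc ∫ ω, ((M.L n ω - M.EL n) j k) ^ 2 ∂M.P
      = (n : ℝ)⁻¹ ^ 2 * ∑ i, (M.x n i j * M.x n i k * deriv (deriv M.h) (M.lin n i)) ^ 2 *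
          variance (M.y n i) M.P := M.integral_sq_L_sub_EL_apply hC7 n j k
    _ ≤ (n : ℝ)⁻¹ ^ 2 * ∑ i, (Kx * Kx * Kh) ^ 2 * (1 + ∫ ω, |M.y n i ω| ^ 6 ∂M.P) := by
        refine mul_le_mul_of_nonneg_left (Finset.sum_le_sum fun i _ => ?_) (by positivity)
        exact mul_le_mul (hcoef i) (hvar i) (variance_nonneg _ _) (sq_nonneg _)
    _ = (Kx * Kx * Kh) ^ 2 * (1 + (n : ℝ)⁻¹ * ∑ i, ∫ ω, |M.y n i ω| ^ 6 ∂M.P) / n := by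
        rw [← Finset.mul_sum, Finset.sum_add_distrib]
        simp only [Finset.sum_const, Finset.card_univ, Fintype.card_fin, nsmul_eq_mul, mul_one]
        field_simp
    _ ≤ (Kx * Kx * Kh) ^ 2 * (1 + |Ky|) / n := by gcongr

lemma exists_measureReal_lt_matOpNorm_L_sub_EL_le (hC5 : M.C5) (hC7 : M.C7) (hC9ii : M.C9ii) :
    ∃ B : ℝ, ∀ n : ℕ, 0 < n → ∀ C : ℝ, 0 < C →
      M.P.real {ω | C * ((M.d n : ℝ) / Real.sqrt n) < matOpNorm (M.L n ω - M.EL n)} ≤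
        B / C ^ 2 := by
  have := M.prob
  obtain ⟨σ2, hσ2, hbound⟩ := M.exists_integral_sq_L_sub_EL_apply_le hC5 hC7 hC9ii
  refine ⟨σ2, fun n hn C hC => ?_⟩
  rcases Nat.eq_zero_or_pos (M.d n) with hd | hd
  -- For `d = 0` the threshold is `0`, where Chebyshev says nothing; but then the norm is `0` too.
  · have : IsEmpty (Fin (M.d n)) := by rw [hd]; infer_instance
    simp only [hd, CharP.cast_eq_zero, zero_div, mul_zero, matOpNorm_eq_zero_of_isEmpty,
      lt_self_iff_false, Set.ofPred_false, measureReal_empty]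
    positivity
  have hn' : (0 : ℝ) < n := Nat.cast_pos.2 hn
  have hd' : (0 : ℝ) < M.d n := Nat.cast_pos.2 hd
  have hscale : (0 : ℝ) < (M.d n : ℝ) ^ 2 / n := by positivity
  have hmarkov := measureReal_lt_matOpNorm_mul_sq_le (M.integrable_sq_L_sub_EL_apply hC7 n)
    (t := C * ((M.d n : ℝ) / Real.sqrt n)) (by positivity)
  have hsum : ∑ j : Fin (M.d n), ∑ k : Fin (M.d n), ∫ ω, ((M.L n ω - M.EL n) j k) ^ 2 ∂M.P ≤
      σ2 * ((M.d n : ℝ) ^ 2 / n) :=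
    calc _ ≤ ∑ _j : Fin (M.d n), ∑ _k : Fin (M.d n), σ2 / n :=
          Finset.sum_le_sum fun j _ => Finset.sum_le_sum fun k _ => hbound n hn j k
      _ = σ2 * ((M.d n : ℝ) ^ 2 / n) := by
        simp only [Finset.sum_const, Finset.card_univ, Fintype.card_fin, nsmul_eq_mul]; ring
  rw [mul_pow, div_pow, Real.sq_sqrt hn'.le, ← mul_assoc] at hmarkov
  rw [le_div_iff₀ (by positivity)]
  exact le_of_mul_le_mul_right (hmarkov.trans hsum) hscale

end GLM

/-- Lemma on the closeness of `L_n` and `E L_n`.  Under conditions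
(C.5), (C.7) and (C.9.ii), `‖L_n − E L_n‖_op = O_p(d/n^{1/2})`; in particular, if
`d = o(n^{1/2})` then `‖L_n − E L_n‖_op → 0` in probability. -/
theorem statement14 {Ω : Type*} [MeasurableSpace Ω] (M : GLM Ω)
    (hC5 : M.C5) (hC7 : M.C7) (hC9ii : M.C9ii) :
    (∀ ε : ℝ, 0 < ε → ∃ C : ℝ, 0 < C ∧ ∃ N : ℕ, ∀ n ≥ N,
      (M.P {ω | C * ((M.d n : ℝ) / Real.sqrt (n : ℝ)) <
        matOpNorm (M.L n ω - M.EL n)}).toReal < ε) ∧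
    (((fun n => (M.d n : ℝ)) =o[atTop] fun n => Real.sqrt (n : ℝ)) →
      ∀ ε : ℝ, 0 < ε → Tendsto (fun n : ℕ =>
        (M.P {ω | ε < matOpNorm (M.L n ω - M.EL n)}).toReal) atTop (𝓝 0)) := by
  have := M.prob
  obtain ⟨B, hB⟩ := M.exists_measureReal_lt_matOpNorm_L_sub_EL_le hC5 hC7 hC9ii
  have hOp : ∀ ε : ℝ, 0 < ε → ∃ C : ℝ, 0 < C ∧ ∃ N : ℕ, ∀ n ≥ N,
      M.P.real {ω | C * ((M.d n : ℝ) / Real.sqrt n) < matOpNorm (M.L n ω - M.EL n)} < ε := by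
    intro ε hε
    have hB_small : Tendsto (fun C : ℝ => B / C ^ 2) atTop (𝓝 0) :=
      tendsto_const_nhds.div_atTop (tendsto_pow_atTop two_ne_zero)
    obtain ⟨C, hCε, hC⟩ := ((hB_small.eventually (gt_mem_nhds hε)).and
      (eventually_gt_atTop 0)).exists
    exact ⟨C, hC, 1, fun n hn => (hB n hn C hC).trans_lt hCε⟩
  exact ⟨hOp, fun hd ε hε => tendsto_measureReal_lt_of_isBigOp hd.tendsto_div_nhds_zero hOp hε⟩
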